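/- Let d be a digraphic integer-pair sequence such that the 2-switch meta-graph Ω'_d is disconnected. Then there exist a realization G ∈ R(d), three distinct vertices u, v, w with (u,v),(v,w),(w,u) arcs of G and (v,u),(w,v),(u,w) not arcs of G, such that the realization G' obtained from G by reorienting this directed 3-cycle is not reachable from G by any finite sequence of 2-switches. -/

import Mathlib

/-- A simple directed graph on vertex set `V`: an irreflexive (Boolean) arc
relation, i.e. no self-loops and at most one arc in each direction. -/
structure SDigraph (V : Type) where
  Adj : V → V → Bool
  irrefl : ∀ v, Adj v v = false

/-- Out-degree of a vertex. -/
def SDigraph.outDeg {V : Type} [Fintype V] [DecidableEq V]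
    (G : SDigraph V) (v : V) : ℕ :=
  (Finset.univ.filter fun x => G.Adj v x = true).card

/-- In-degree of a vertex. -/
def SDigraph.inDeg {V : Type} [Fintype V] [DecidableEq V]
    (G : SDigraph V) (v : V) : ℕ :=
  (Finset.univ.filter fun x => G.Adj x v = true).card

/-- `G` realizes the integer-pair (degree) sequence `d`: vertex `v` has
out-degree `(d v).1` and in-degree `(d v).2`. -/
def Realizes {V : Type} [Fintype V] [DecidableEq V]
    (G : SDigraph V) (d : V → ℕ × ℕ) : Prop :=
  ∀ v, G.outDeg v = (d v).1 ∧ G.inDeg v = (d v).2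

/-- `H` is obtained from `G` by a single 2-switch: arcs `(v₁,v₂)`, `(v₃,v₄)`
are replaced by `(v₁,v₄)`, `(v₃,v₂)`, allowed only when the four vertices
are distinct, the former two are arcs and the latter two are not. -/
def TwoSwitch {V : Type} [DecidableEq V] (G H : SDigraph V) : Prop :=
  ∃ v₁ v₂ v₃ v₄ : V,
    v₁ ≠ v₂ ∧ v₁ ≠ v₃ ∧ v₁ ≠ v₄ ∧ v₂ ≠ v₃ ∧ v₂ ≠ v₄ ∧ v₃ ≠ v₄ ∧
    G.Adj v₁ v₂ = true ∧ G.Adj v₃ v₄ = true ∧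
    G.Adj v₁ v₄ = false ∧ G.Adj v₃ v₂ = false ∧
    ∀ x y, H.Adj x y =
      if (x = v₁ ∧ y = v₂) ∨ (x = v₃ ∧ y = v₄) then false
      else if (x = v₁ ∧ y = v₄) ∨ (x = v₃ ∧ y = v₂) then true
      else G.Adj x y

/-- `G` and `H` differ by a single 2-switch (in either direction). -/
def TwoSwitchStep {V : Type} [DecidableEq V] (G H : SDigraph V) : Prop :=
  TwoSwitch G H ∨ TwoSwitch H G

/-- `H` is reachable from `G` by a finite sequence of 2-switches. -/
def Reach2 {V : Type} [DecidableEq V] (G H : SDigraph V) : Prop :=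
  Relation.ReflTransGen TwoSwitchStep G H

/-- `H` is obtained from `G` by reorienting an induced directed 3-cycle:
there are distinct `u v w` with arcs `(u,v),(v,w),(w,u)` and no arcs
`(v,u),(w,v),(u,w)`, and `H` replaces these three arcs by the reversed ones. -/
def CycleReorient {V : Type} [DecidableEq V] (G H : SDigraph V) : Prop :=
  ∃ u v w : V, u ≠ v ∧ v ≠ w ∧ u ≠ w ∧
    G.Adj u v = true ∧ G.Adj v w = true ∧ G.Adj w u = true ∧
    G.Adj v u = false ∧ G.Adj w v = false ∧ G.Adj u w = false ∧
    ∀ x y, H.Adj x y =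
      if (x = u ∨ x = v ∨ x = w) ∧ (y = u ∨ y = v ∨ y = w) then G.Adj y x
      else G.Adj x y

/-- The three vertices `u, v, w` induce a directed 3-cycle in `G`: the induced
subgraph on them consists of exactly the three arcs of one cyclic orientation. -/
def InducesC3 {V : Type} (G : SDigraph V) (u v w : V) : Prop :=
  (G.Adj u v = true ∧ G.Adj v w = true ∧ G.Adj w u = true ∧
    G.Adj v u = false ∧ G.Adj w v = false ∧ G.Adj u w = false) ∨
  (G.Adj v u = true ∧ G.Adj w v = true ∧ G.Adj u w = true ∧
    G.Adj u v = false ∧ G.Adj v w = false ∧ G.Adj w u = false)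

/-- The digraph obtained from `G` by reversing all arcs among `{u, v, w}`
(and leaving all other arcs unchanged).  When `{u,v,w}` induces a directed
3-cycle in `G`, this is exactly the reorientation of that 3-cycle. -/
def flip3 {V : Type} [DecidableEq V] (G : SDigraph V) (u v w : V) : SDigraph V where
  Adj x y :=
    if (x = u ∨ x = v ∨ x = w) ∧ (y = u ∨ y = v ∨ y = w) then G.Adj y x
    else G.Adj x y
  irrefl := by
    intro x
    try simp only []
    rw [ite_self]
    exact G.irrefl x

/-!
Induct on the number of ordered pairs on which two realizations `G`, `H` of `d` disagree.
The arcs of `G` only and those of `H` only are balanced at every vertex, so they form closed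
alternating walks `t 0 → h 0 ← t 1 → h 1 ← ⋯`; take a shortest one. If `t 0 ≠ h 1`, the pair
`(t 0, h 1)` either gives a 2-switch in `G` or in `H` that lowers the disagreement, or is an
arc of `G` only that shortens the walk. Otherwise the arcs of `G` on the walk form a directed
cycle: of length three it is a directed triangle whose reorientation lowers the disagreement,
and of length at least four the same argument applies to `(t 3, h 1)` with the roles of `G`
and `H` exchanged. So if every triangle reorientation is reachable by 2-switches, so is every
realization.
-/

open Finset Function

namespace SDigraph

variable {V : Type}

theorem ext {G H : SDigraph V} (h : ∀ a b, G.Adj a b = H.Adj a b) : G = H := by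
  cases G; cases H; congr; funext a b; exact h a b

theorem ne_of_adj {G : SDigraph V} {a b : V} (h : G.Adj a b = true) : a ≠ b := by
  rintro rfl; simp [G.irrefl] at h

variable [Fintype V] [DecidableEq V]

theorem outDeg_eq_of_perm {G G' : SDigraph V} {a : V} (σ : Equiv.Perm V)
    (h : ∀ y, G'.Adj a y = G.Adj a (σ y)) : G'.outDeg a = G.outDeg a :=
  card_equiv σ (by simp [h])

theorem inDeg_eq_of_perm {G G' : SDigraph V} {a : V} (σ : Equiv.Perm V)
    (h : ∀ x, G'.Adj x a = G.Adj (σ x) a) : G'.inDeg a = G.inDeg a :=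
  card_equiv σ (by simp [h])

end SDigraph

open SDigraph

section Degrees

variable {V : Type} [Fintype V] [DecidableEq V]

theorem TwoSwitch.outDeg_eq {G H : SDigraph V} (h : TwoSwitch G H) (x : V) :
    H.outDeg x = G.outDeg x := by
  obtain ⟨v₁, v₂, v₃, v₄, h12, h13, h14, h23, h24, h34, a12, a34, a14, a32, hH⟩ := h
  by_cases hx : x = v₁ ∨ x = v₃
  · refine outDeg_eq_of_perm (Equiv.swap v₂ v₄) fun y => ?_
    rw [hH, Equiv.swap_apply_def]
    grind
  · refine outDeg_eq_of_perm (Equiv.refl V) fun y => ?_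
    rw [hH]; simp_all

theorem TwoSwitch.inDeg_eq {G H : SDigraph V} (h : TwoSwitch G H) (y : V) :
    H.inDeg y = G.inDeg y := by
  obtain ⟨v₁, v₂, v₃, v₄, h12, h13, h14, h23, h24, h34, a12, a34, a14, a32, hH⟩ := h
  by_cases hy : y = v₂ ∨ y = v₄
  · refine inDeg_eq_of_perm (Equiv.swap v₁ v₃) fun x => ?_
    rw [hH, Equiv.swap_apply_def]
    grind
  · refine inDeg_eq_of_perm (Equiv.refl V) fun x => ?_
    rw [hH]; simp_all

theorem TwoSwitch.realizes {d : V → ℕ × ℕ} {G H : SDigraph V} (h : TwoSwitch G H)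
    (hG : Realizes G d) : Realizes H d := fun x => by
  rw [h.outDeg_eq, h.inDeg_eq]; exact hG x

end Degrees

section Switch

variable {V : Type} [DecidableEq V] {G : SDigraph V}

def SDigraph.switch (G : SDigraph V) (a b c d : V) (had : a ≠ d) (hcb : c ≠ b) :
    SDigraph V where
  Adj x y :=
    if (x = a ∧ y = b) ∨ (x = c ∧ y = d) then false
    else if (x = a ∧ y = d) ∨ (x = c ∧ y = b) then true
    else G.Adj x y
  irrefl x := by grind [G.irrefl x]

theorem twoSwitch_switch {a b c d : V} (hab : a ≠ b) (hac : a ≠ c) (had : a ≠ d)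
    (hbc : b ≠ c) (hbd : b ≠ d) (hcd : c ≠ d) (h₁ : G.Adj a b = true) (h₂ : G.Adj c d = true)
    (h₃ : G.Adj a d = false) (h₄ : G.Adj c b = false) :
    TwoSwitch G (G.switch a b c d had hbc.symm) :=
  ⟨a, b, c, d, hab, hac, had, hbc, hbd, hcd, h₁, h₂, h₃, h₄, fun _ _ => rfl⟩

end Switch

theorem flip3_rotate {V : Type} [DecidableEq V] (G : SDigraph V) (u v w : V) :
    flip3 G u v w = flip3 G v w u :=
  SDigraph.ext fun x y => by simp only [flip3]; grind

structure IsCyclicTriangle {V : Type} (G : SDigraph V) (u v w : V) : Prop where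
  adj_uv : G.Adj u v = true
  adj_vw : G.Adj v w = true
  adj_wu : G.Adj w u = true
  adj_vu : G.Adj v u = false
  adj_wv : G.Adj w v = false
  adj_uw : G.Adj u w = false

namespace IsCyclicTriangle

variable {V : Type} {G : SDigraph V} {u v w : V}

theorem rotate (h : IsCyclicTriangle G u v w) : IsCyclicTriangle G v w u :=
  ⟨h.adj_vw, h.adj_wu, h.adj_uv, h.adj_wv, h.adj_uw, h.adj_vu⟩

theorem ne_uv (h : IsCyclicTriangle G u v w) : u ≠ v := ne_of_adj h.adj_uv
theorem ne_vw (h : IsCyclicTriangle G u v w) : v ≠ w := ne_of_adj h.adj_vw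
theorem ne_uw (h : IsCyclicTriangle G u v w) : u ≠ w := (ne_of_adj h.adj_wu).symm

variable [Fintype V] [DecidableEq V]

theorem outDeg_flip3_left (h : IsCyclicTriangle G u v w) :
    (flip3 G u v w).outDeg u = G.outDeg u := by
  refine outDeg_eq_of_perm (Equiv.swap v w) fun y => ?_
  simp only [flip3, Equiv.swap_apply_def]
  grind [h.ne_uv, h.ne_vw, h.ne_uw, h.adj_uv, h.adj_wu, h.adj_vu, h.adj_uw]

theorem inDeg_flip3_left (h : IsCyclicTriangle G u v w) :
    (flip3 G u v w).inDeg u = G.inDeg u := by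
  refine inDeg_eq_of_perm (Equiv.swap v w) fun x => ?_
  simp only [flip3, Equiv.swap_apply_def]
  grind [h.ne_uv, h.ne_vw, h.ne_uw, h.adj_uv, h.adj_wu, h.adj_vu, h.adj_uw]

theorem realizes_flip3 {d : V → ℕ × ℕ} (h : IsCyclicTriangle G u v w) (hG : Realizes G d) :
    Realizes (flip3 G u v w) d := by
  intro x
  obtain ⟨hout, hin⟩ := hG x
  rw [← hout, ← hin]
  by_cases hxu : x = u
  · subst hxu; exact ⟨h.outDeg_flip3_left, h.inDeg_flip3_left⟩
  by_cases hxv : x = v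
  · subst hxv; rw [flip3_rotate]; exact ⟨h.rotate.outDeg_flip3_left, h.rotate.inDeg_flip3_left⟩
  by_cases hxw : x = w
  · subst hxw; rw [← flip3_rotate]
    exact ⟨h.rotate.rotate.outDeg_flip3_left, h.rotate.rotate.inDeg_flip3_left⟩
  exact ⟨outDeg_eq_of_perm (Equiv.refl V) fun y => by simp [flip3, hxu, hxv, hxw],
    inDeg_eq_of_perm (Equiv.refl V) fun y => by simp [flip3, hxu, hxv, hxw]⟩

end IsCyclicTriangle

def OnlyIn {V : Type} (G H : SDigraph V) (a b : V) : Prop :=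
  G.Adj a b = true ∧ H.Adj a b = false

section Mismatch

variable {V : Type} [Fintype V]

def mismatch (G H : SDigraph V) : Finset (V × V) :=
  univ.filter fun p => G.Adj p.1 p.2 ≠ H.Adj p.1 p.2

theorem mismatch_comm (G H : SDigraph V) : mismatch G H = mismatch H G := by
  ext; simp [mismatch, ne_comm]

variable [DecidableEq V]

theorem card_mismatch_lt {G G' H : SDigraph V} {P : Finset (V × V)} (x : V × V)
    (hP : 1 < #P) (hPG : P ⊆ mismatch G H) (hPG' : ∀ p ∈ P, G'.Adj p.1 p.2 = H.Adj p.1 p.2)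
    (hG' : ∀ p ∉ insert x P, G'.Adj p.1 p.2 = G.Adj p.1 p.2) :
    #(mismatch G' H) < #(mismatch G H) := by
  have hsub : mismatch G' H ⊆ insert x (mismatch G H \ P) := by
    intro p hp
    by_cases hpx : p ∈ insert x P
    · rcases mem_insert.1 hpx with rfl | hpP
      · exact mem_insert_self _ _
      · simp [mismatch, hPG' p hpP] at hp
    · simp only [mem_insert, not_or] at hpx
      simp_all [mismatch]
  calc #(mismatch G' H) ≤ #(mismatch G H \ P) + 1 :=
        (card_le_card hsub).trans (card_insert_le _ _)
    _ < #(mismatch G H) := by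
      rw [card_sdiff_of_subset hPG]; have := card_le_card hPG; omega

def SwitchReduces (G H : SDigraph V) : Prop :=
  ∃ G', TwoSwitch G G' ∧ #(mismatch G' H) < #(mismatch G H)

def FlipReduces (G H : SDigraph V) : Prop :=
  ∃ u v w, IsCyclicTriangle G u v w ∧ #(mismatch (flip3 G u v w) H) < #(mismatch G H)

end Mismatch

section Reductions

variable {V : Type} [Fintype V] [DecidableEq V] {G H : SDigraph V}

theorem reduces_or_onlyIn_of_wedge {a b c d : V} (hab : OnlyIn G H a b) (hcb : OnlyIn H G c b)
    (hcd : OnlyIn G H c d) (hac : a ≠ c) (hbd : b ≠ d) (had : a ≠ d) :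
    SwitchReduces G H ∨ SwitchReduces H G ∨ OnlyIn G H a d := by
  have hab' := ne_of_adj hab.1
  have hcb' := ne_of_adj hcb.1
  have hcd' := ne_of_adj hcd.1
  obtain ⟨hab₁, hab₂⟩ := hab; obtain ⟨hcb₁, hcb₂⟩ := hcb; obtain ⟨hcd₁, hcd₂⟩ := hcd
  set P : Finset (V × V) := {(a, b), (c, b), (c, d)}
  have hP : 1 < #P := one_lt_card.2 ⟨(a, b), by simp [P], (c, b), by simp [P], by simp [hac]⟩
  have hPG : P ⊆ mismatch G H := by simp [P, insert_subset_iff, mismatch, *]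
  cases hGad : G.Adj a d
  · refine Or.inl ⟨_, twoSwitch_switch hab' hac had hcb'.symm hbd hcd' hab₁ hcd₁ hGad hcb₂,
      card_mismatch_lt (a, d) hP hPG ?_ ?_⟩
    · simp only [P, mem_insert, mem_singleton, forall_eq_or_imp, forall_eq, SDigraph.switch]
      grind
    · rintro ⟨x, y⟩ hxy
      simp only [P, mem_insert, mem_singleton, Prod.mk.injEq, not_or, SDigraph.switch] at hxy ⊢
      grind
  cases hHad : H.Adj a d
  · exact Or.inr (Or.inr ⟨hGad, hHad⟩)
  refine Or.inr (Or.inl ⟨_, twoSwitch_switch hcb' hac.symm hcd' hab'.symm hbd had hcb₁ hHad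
    hcd₂ hab₂, card_mismatch_lt (a, d) hP (mismatch_comm G H ▸ hPG) ?_ ?_⟩)
  · simp only [P, mem_insert, mem_singleton, forall_eq_or_imp, forall_eq, SDigraph.switch]
    grind
  · rintro ⟨x, y⟩ hxy
    simp only [P, mem_insert, mem_singleton, Prod.mk.injEq, not_or, SDigraph.switch] at hxy ⊢
    grind

theorem flipReduces_of_onlyIn {u v w : V}
    (huv : OnlyIn G H u v) (hvw : OnlyIn G H v w) (hwu : OnlyIn G H w u)
    (hvu : OnlyIn H G v u) (hwv : OnlyIn H G w v) (huw : OnlyIn H G u w) : FlipReduces G H := by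
  have hT : IsCyclicTriangle G u v w := ⟨huv.1, hvw.1, hwu.1, hvu.2, hwv.2, huw.2⟩
  have := hT.ne_uv; have := hT.ne_vw; have := hT.ne_uw
  obtain ⟨huv₁, huv₂⟩ := huv; obtain ⟨hvw₁, hvw₂⟩ := hvw; obtain ⟨hwu₁, hwu₂⟩ := hwu
  obtain ⟨hvu₁, hvu₂⟩ := hvu; obtain ⟨hwv₁, hwv₂⟩ := hwv; obtain ⟨huw₁, huw₂⟩ := huw
  set P : Finset (V × V) := {(u, v), (v, w), (w, u), (v, u), (w, v), (u, w)}
  refine ⟨u, v, w, hT, card_mismatch_lt (P := P) (u, v) ?_ ?_ ?_ ?_⟩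
  · exact one_lt_card.2 ⟨(u, v), by simp [P], (v, w), by simp [P], by simp [*]⟩
  · simp [P, insert_subset_iff, mismatch, *]
  · simp only [P, mem_insert, mem_singleton, forall_eq_or_imp, forall_eq, flip3]
    grind
  · rintro ⟨x, y⟩ hxy
    simp only [P, mem_insert, mem_singleton, Prod.mk.injEq, not_or, flip3] at hxy ⊢
    grind [G.irrefl]

end Reductions

theorem Nat.add_one_mod_add_one (n p : ℕ) :
    (n + 1) % (p + 1) = if n % (p + 1) = p then 0 else n % (p + 1) + 1 := by
  have hlt : n % (p + 1) < p + 1 := Nat.mod_lt n (by omega)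
  split_ifs with hm
  · rw [← Nat.mod_add_mod, hm, Nat.mod_self]
  · rw [← Nat.mod_add_mod, Nat.mod_eq_of_lt (by omega)]

section AltCycles

variable {V : Type} {G H : SDigraph V}

/-- An infinite walk `t 0 → h 0 ← t 1 → h 1 ← t 2 → ⋯` whose forward arcs lie only in `G`
and whose backward arcs lie only in `H`. -/
structure IsAltWalk (G H : SDigraph V) (t h : ℕ → V) : Prop where
  forward : ∀ n, OnlyIn G H (t n) (h n)
  backward : ∀ n, OnlyIn H G (t (n + 1)) (h n)

structure IsAltCycle (G H : SDigraph V) (k : ℕ) (t h : ℕ → V) : Prop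
    extends IsAltWalk G H t h where
  pos : 0 < k
  periodic_tail : Periodic t k
  periodic_head : Periodic h k

theorem IsAltWalk.exists_altCycle {t h : ℕ → V} (hw : IsAltWalk G H t h) {a : V} {s p : ℕ}
    (hs : OnlyIn G H a (h s)) (hsp : OnlyIn H G a (h (s + p))) :
    ∃ t' h', IsAltCycle G H (p + 1) t' h' := by
  refine ⟨fun n => if n % (p + 1) = 0 then a else t (s + n % (p + 1)),
    fun n => h (s + n % (p + 1)), ⟨⟨fun n => ?_, fun n => ?_⟩, p.succ_pos,
      fun n => by simp, fun n => by simp⟩⟩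
  · split_ifs with hn
    · simpa [hn] using hs
    · exact hw.forward _
  · by_cases hp : n % (p + 1) = p
    · simpa [Nat.add_one_mod_add_one, hp] using hsp
    · simpa [Nat.add_one_mod_add_one, hp, add_assoc] using hw.backward (s + n % (p + 1))

theorem IsAltCycle.shift {k : ℕ} {t h : ℕ → V} (hc : IsAltCycle G H k t h) (s : ℕ) :
    IsAltCycle G H k (fun n => t (n + s)) (fun n => h (n + s)) :=
  ⟨⟨fun n => hc.forward _, fun n => by simpa [add_right_comm] using hc.backward (n + s)⟩,
    hc.pos, hc.periodic_tail.add_const s, hc.periodic_head.add_const s⟩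

end AltCycles

theorem Finset.exists_mem_notMem_of_card_eq {α : Type} [DecidableEq α] {s t : Finset α}
    {a : α} (hst : #s = #t) (has : a ∈ s) (hat : a ∉ t) : ∃ b ∈ t, b ∉ s := by
  obtain ⟨b, hbt, hbs⟩ := exists_mem_notMem_of_card_lt_card (s := s.erase a) (t := t)
    (by rw [card_erase_of_mem has, ← hst]; exact Nat.sub_lt (card_pos.2 ⟨a, has⟩) one_pos)
  exact ⟨b, hbt, fun hb => hbs (mem_erase.2 ⟨fun hba => hat (hba ▸ hbt), hb⟩)⟩

section Balance

variable {V : Type} [Fintype V] [DecidableEq V] {G H : SDigraph V}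

theorem exists_onlyIn_of_outDeg_eq {a b : V} (hdeg : G.outDeg a = H.outDeg a)
    (hab : OnlyIn G H a b) : ∃ d, OnlyIn H G a d := by
  obtain ⟨d, hd, hd'⟩ := exists_mem_notMem_of_card_eq hdeg (a := b) (by simp [hab.1])
    (by simp [hab.2])
  exact ⟨d, by simpa using hd, by simpa using hd'⟩

theorem exists_onlyIn_of_inDeg_eq {a b : V} (hdeg : G.inDeg b = H.inDeg b)
    (hab : OnlyIn G H a b) : ∃ c, OnlyIn H G c b := by
  obtain ⟨c, hc, hc'⟩ := exists_mem_notMem_of_card_eq hdeg (a := a) (by simp [hab.1])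
    (by simp [hab.2])
  exact ⟨c, by simpa using hc, by simpa using hc'⟩

theorem exists_altWalk (hout : ∀ x, G.outDeg x = H.outDeg x)
    (hin : ∀ x, G.inDeg x = H.inDeg x) {a b : V} (hab : OnlyIn G H a b) :
    ∃ t h, IsAltWalk G H t h := by
  have step : ∀ p : {p : V × V // OnlyIn G H p.1 p.2},
      ∃ q : {p : V × V // OnlyIn G H p.1 p.2}, OnlyIn H G q.1.1 p.1.2 := by
    rintro ⟨⟨x, y⟩, hxy⟩
    obtain ⟨c, hc⟩ := exists_onlyIn_of_inDeg_eq (hin y) hxy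
    obtain ⟨d, hd⟩ := exists_onlyIn_of_outDeg_eq (hout c).symm hc
    exact ⟨⟨(c, d), hd⟩, hc⟩
  choose f hf using step
  let q (n : ℕ) := f^[n] ⟨(a, b), hab⟩
  refine ⟨fun n => (q n).1.1, fun n => (q n).1.2, fun n => (q n).2, fun n => ?_⟩
  simp only [q, iterate_succ_apply']
  exact hf _

end Balance

section MinimalCycles

variable {V : Type} {G H : SDigraph V} {t h : ℕ → V}

theorem IsAltWalk.exists_altCycle_of_tail_eq (hw : IsAltWalk G H t h) {i j : ℕ} (hij : i < j)
    (heq : t i = t j) : ∃ t' h', IsAltCycle G H (j - i) t' h' := by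
  have hsp : OnlyIn H G (t i) (h (i + (j - i - 1))) := by
    rw [heq, show i + (j - i - 1) = j - 1 by omega]
    simpa [Nat.sub_add_cancel (show 1 ≤ j by omega)] using hw.backward (j - 1)
  simpa [show j - i - 1 + 1 = j - i by omega] using hw.exists_altCycle (hw.forward i) hsp

theorem IsAltWalk.exists_altCycle_of_head_eq (hw : IsAltWalk G H t h) {i j : ℕ} (hij : i < j)
    (heq : h i = h j) : ∃ t' h', IsAltCycle G H (j - i) t' h' := by
  have hsp : OnlyIn H G (t (i + 1)) (h (i + 1 + (j - i - 1))) := by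
    rw [show i + 1 + (j - i - 1) = j by omega, ← heq]
    exact hw.backward i
  simpa [show j - i - 1 + 1 = j - i by omega] using hw.exists_altCycle (hw.forward (i + 1)) hsp

theorem IsAltCycle.two_le {k : ℕ} (hc : IsAltCycle G H k t h) : 2 ≤ k := by
  by_contra hk
  obtain rfl : k = 1 := by have := hc.pos; omega
  have h1 := (hc.backward 0).2
  rw [hc.periodic_tail 0, (hc.forward 0).1] at h1
  exact Bool.noConfusion h1

def NoAltCycleShorterThan (G H : SDigraph V) (k : ℕ) : Prop :=
  ∀ m < k, ∀ t h, ¬IsAltCycle G H m t h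

variable {k : ℕ}

theorem IsAltWalk.tail_ne_of_minimal (hw : IsAltWalk G H t h)
    (hmin : NoAltCycleShorterThan G H k) {i j : ℕ} (hij : i < j) (hjk : j < k) :
    t i ≠ t j := fun heq => by
  obtain ⟨t', h', hc⟩ := hw.exists_altCycle_of_tail_eq hij heq
  exact hmin _ (by omega) t' h' hc

theorem IsAltWalk.head_ne_of_minimal (hw : IsAltWalk G H t h)
    (hmin : NoAltCycleShorterThan G H k) {i j : ℕ} (hij : i < j) (hjk : j < k) :
    h i ≠ h j := fun heq => by
  obtain ⟨t', h', hc⟩ := hw.exists_altCycle_of_head_eq hij heq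
  exact hmin _ (by omega) t' h' hc

variable [Fintype V] [DecidableEq V]

theorem reduces_of_minimal_of_ne (hc : IsAltCycle G H k t h)
    (hmin : NoAltCycleShorterThan G H k) (h01 : t 0 ≠ h 1) :
    SwitchReduces G H ∨ SwitchReduces H G := by
  have hk := hc.two_le
  rcases reduces_or_onlyIn_of_wedge (hc.forward 0) (hc.backward 0) (hc.forward 1)
    (hc.tail_ne_of_minimal hmin zero_lt_one hk) (hc.head_ne_of_minimal hmin zero_lt_one hk)
    h01 with hG | hH | hchord
  · exact Or.inl hG
  · exact Or.inr hH
  · have hsp : OnlyIn H G (t 0) (h (1 + (k - 2))) := by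
      have ht0 : t 0 = t (k - 1 + 1) := by
        rw [Nat.sub_add_cancel (by omega)]; simpa using (hc.periodic_tail 0).symm
      rw [show 1 + (k - 2) = k - 1 by omega, ht0]
      exact hc.backward _
    obtain ⟨t', h', hc'⟩ := hc.exists_altCycle hchord hsp
    exact (hmin _ (by omega) t' h' hc').elim

theorem reduces_of_minimal_of_forall_eq (hc : IsAltCycle G H k t h)
    (hmin : NoAltCycleShorterThan G H k) (hcyc : ∀ n, t n = h (n + 1)) :
    SwitchReduces G H ∨ SwitchReduces H G ∨ FlipReduces G H := by
  have hk := hc.two_le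
  have ht : ∀ n, t (n + k) = t n := hc.periodic_tail
  -- the arcs of `G` on the cycle are `t (n + 1) → t n`
  rcases lt_or_ge k 4 with hk4 | hk4
  · interval_cases k
    · have h21 := hc.backward 1
      rw [ht 0, ← hcyc 0] at h21
      exact (ne_of_adj h21.1 rfl).elim
    · refine Or.inr (Or.inr
        (flipReduces_of_onlyIn (u := t 0) (v := t 2) (w := t 1) ?_ ?_ ?_ ?_ ?_ ?_))
      · simpa [ht 0, ← hcyc 2] using hc.forward 3
      · simpa [← hcyc 1] using hc.forward 2
      · simpa [← hcyc 0] using hc.forward 1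
      · simpa [← hcyc 0] using hc.backward 1
      · simpa [ht 1, ← hcyc 2] using hc.backward 3
      · simpa [ht 0, ← hcyc 1] using hc.backward 2
  · have h30 := hc.tail_ne_of_minimal hmin (i := 0) (j := 3) (by norm_num) (by omega)
    have h23 := hc.tail_ne_of_minimal hmin (i := 2) (j := 3) (by norm_num) (by omega)
    have h12 := hc.head_ne_of_minimal hmin (i := 1) (j := 2) (by norm_num) (by omega)
    rcases reduces_or_onlyIn_of_wedge (hc.backward 2) (hc.forward 2) (hc.backward 1)
      h23.symm h12.symm (hcyc 0 ▸ h30.symm) with hH | hG | hchord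
    · exact Or.inr (Or.inl hH)
    · exact Or.inl hG
    · have hsp : OnlyIn H G (t 3) (h (3 + (k - 2))) := by
        rwa [show 3 + (k - 2) = 1 + k by omega, hc.periodic_head]
      obtain ⟨t', h', hc'⟩ := hc.exists_altCycle (hc.forward 3) hsp
      exact (hmin _ (by omega) t' h' hc').elim

end MinimalCycles

section Connectivity

variable {V : Type} [Fintype V] [DecidableEq V] {G H : SDigraph V}

theorem exists_altCycle (hout : ∀ x, G.outDeg x = H.outDeg x)
    (hin : ∀ x, G.inDeg x = H.inDeg x) (hne : G ≠ H) : ∃ k t h, IsAltCycle G H k t h := by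
  have hab : ∃ a b, OnlyIn G H a b := by
    obtain ⟨a, b, hab⟩ : ∃ a b, G.Adj a b ≠ H.Adj a b := by
      by_contra! hGH; exact hne (SDigraph.ext hGH)
    cases hG : G.Adj a b
    · have hH : H.Adj a b = true := by cases hH : H.Adj a b <;> simp_all
      obtain ⟨c, hc⟩ := exists_onlyIn_of_inDeg_eq (hin b).symm ⟨hH, hG⟩
      exact ⟨c, b, hc⟩
    · exact ⟨a, b, hG, by simpa [hG] using hab.symm⟩
  obtain ⟨a, b, hab⟩ := hab
  obtain ⟨t, h, hw⟩ := exists_altWalk hout hin hab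
  obtain ⟨i, j, hij, heq⟩ := Finite.exists_ne_map_eq_of_infinite t
  rcases hij.lt_or_gt with hij | hji
  · exact ⟨_, hw.exists_altCycle_of_tail_eq hij heq⟩
  · exact ⟨_, hw.exists_altCycle_of_tail_eq hji heq.symm⟩

theorem exists_reduction (hout : ∀ x, G.outDeg x = H.outDeg x)
    (hin : ∀ x, G.inDeg x = H.inDeg x) (hne : G ≠ H) :
    SwitchReduces G H ∨ SwitchReduces H G ∨ FlipReduces G H := by
  classical
  have hex := exists_altCycle hout hin hne
  obtain ⟨t, h, hc⟩ := Nat.find_spec hex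
  have hmin : NoAltCycleShorterThan G H (Nat.find hex) :=
    fun m hm t' h' hc' => Nat.find_min hex hm ⟨t', h', hc'⟩
  by_cases hcyc : ∀ n, t n = h (n + 1)
  · exact reduces_of_minimal_of_forall_eq hc hmin hcyc
  · obtain ⟨n, hn⟩ := not_forall.1 hcyc
    have := reduces_of_minimal_of_ne (hc.shift n) hmin (by simpa [add_comm 1] using hn)
    tauto

theorem reach2_of_realizes {d : V → ℕ × ℕ}
    (hflip : ∀ K u v w, Realizes K d → IsCyclicTriangle K u v w → Reach2 K (flip3 K u v w))
    (hG : Realizes G d) (hH : Realizes H d) : Reach2 G H := by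
  induction hn : #(mismatch G H) using Nat.strong_induction_on generalizing G H with
  | _ n ih =>
  subst hn
  by_cases hGH : G = H
  · exact hGH ▸ .refl
  have hout x : G.outDeg x = H.outDeg x := (hG x).1.trans (hH x).1.symm
  have hin x : G.inDeg x = H.inDeg x := (hG x).2.trans (hH x).2.symm
  rcases exists_reduction hout hin hGH with
    ⟨G', hs, hlt⟩ | ⟨H', hs, hlt⟩ | ⟨u, v, w, hT, hlt⟩
  · exact .head (Or.inl hs) (ih _ hlt (hs.realizes hG) hH rfl)
  · rw [mismatch_comm H, mismatch_comm H'] at hlt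
    exact .tail (ih _ hlt hG (hs.realizes hH) rfl) (Or.inr hs)
  · exact (hflip G u v w hG hT).trans (ih _ hlt (hT.realizes_flip3 hG) hH rfl)

end Connectivity

theorem statement4_general {N : ℕ} (d : Fin N → ℕ × ℕ)
    (hdisc : ∃ G H : SDigraph (Fin N),
      Realizes G d ∧ Realizes H d ∧ ¬ Reach2 G H) :
    ∃ (G : SDigraph (Fin N)) (u v w : Fin N),
      Realizes G d ∧ u ≠ v ∧ v ≠ w ∧ u ≠ w ∧
      G.Adj u v = true ∧ G.Adj v w = true ∧ G.Adj w u = true ∧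
      G.Adj v u = false ∧ G.Adj w v = false ∧ G.Adj u w = false ∧
      ¬ Reach2 G (flip3 G u v w) := by
  obtain ⟨G, H, hG, hH, hGH⟩ := hdisc
  by_contra hno
  refine hGH (reach2_of_realizes (fun K u v w hKd hT => ?_) hG hH)
  by_contra hK
  exact hno ⟨K, u, v, w, hKd, hT.ne_uv, hT.ne_vw, hT.ne_uw, hT.adj_uv, hT.adj_vw, hT.adj_wu,
    hT.adj_vu, hT.adj_wv, hT.adj_uw, hK⟩

/-- if the 2-switch meta-graph `Ω'_d` is disconnected, then
there is a realization `G` of `d` and a directed 3-cycle `(u,v),(v,w),(w,u)`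
in `G` (with no reverse arcs) such that the realization obtained by
reorienting this 3-cycle is not reachable from `G` by 2-switches. -/
theorem statement4 {N : ℕ} (d : Fin N → ℕ × ℕ)
    (hd : ∃ G : SDigraph (Fin N), Realizes G d)
    (hdisc : ∃ G H : SDigraph (Fin N),
      Realizes G d ∧ Realizes H d ∧ ¬ Reach2 G H) :
    ∃ (G : SDigraph (Fin N)) (u v w : Fin N),
      Realizes G d ∧ u ≠ v ∧ v ≠ w ∧ u ≠ w ∧
      G.Adj u v = true ∧ G.Adj v w = true ∧ G.Adj w u = true ∧
      G.Adj v u = false ∧ G.Adj w v = false ∧ G.Adj u w = false ∧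
      ¬ Reach2 G (flip3 G u v w) :=
  statement4_general d hdisc
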